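/- Let H_n be the helm graph on 2n + 1 vertices, with n ≥ 4. Then the clique number of the square of H_n is ω(H_n^2) = n + 1. -/

import Mathlib

/-- The `r`-th power of a simple graph `G`: two distinct vertices are adjacent
iff their distance in `G` is at most `r` (in particular they are connected in `G`). -/
def SimpleGraph.power {V : Type*} (G : SimpleGraph V) (r : ℕ) : SimpleGraph V :=
  SimpleGraph.fromRel (fun u v => G.Reachable u v ∧ G.dist u v ≤ r)

/-- The helm graph `H_n` on `2n + 1` vertices: a wheel (hub `Sum.inl none` joined to
every cycle vertex `Sum.inl (some i)`, the cycle vertices forming the cycle `C_n`)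
together with a pendant vertex `Sum.inr i` attached to the cycle vertex `some i`. -/
def helmGraph (n : ℕ) : SimpleGraph (Option (ZMod n) ⊕ ZMod n) :=
  SimpleGraph.fromRel (fun a b =>
    match a, b with
    | Sum.inl none, Sum.inl (some _) => True
    | Sum.inl (some i), Sum.inl (some j) => j = i + 1
    | Sum.inl (some i), Sum.inr j => i = j
    | _, _ => False)

/-! The hub and the cycle vertices are pairwise at distance at most 2 (through the hub), so they
form a clique of size `n + 1` in `H_n²`. A pendant vertex `w_i` is within distance 2 only of
`u, v_{i-1}, v_i, v_{i+1}`, so a clique containing it has at most `5 ≤ n + 1` vertices, and a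
clique without pendant vertices lies among the `n + 1` wheel vertices. -/

namespace SimpleGraph

variable {V : Type*} {G : SimpleGraph V} {r : ℕ} {u v : V}

theorem power_adj_iff : (G.power r).Adj u v ↔ u ≠ v ∧ ∃ p : G.Walk u v, p.length ≤ r := by
  refine ⟨fun ⟨hne, h⟩ => ⟨hne, ?_⟩,
    fun ⟨hne, p, hp⟩ => ⟨hne, Or.inl ⟨p.reachable, (dist_le p).trans hp⟩⟩⟩
  rcases h with ⟨hreach, hdist⟩ | ⟨hreach, hdist⟩
  · obtain ⟨p, hp⟩ := hreach.exists_walk_length_eq_dist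
    exact ⟨p, hp ▸ hdist⟩
  · obtain ⟨p, hp⟩ := hreach.exists_walk_length_eq_dist
    exact ⟨p.reverse, by rwa [Walk.length_reverse, hp]⟩

end SimpleGraph

open SimpleGraph Finset

namespace helmGraph

variable {n : ℕ}

theorem adj_hub (i : ZMod n) : (helmGraph n).Adj (.inl none) (.inl (some i)) :=
  ⟨by simp, Or.inl trivial⟩

theorem eq_of_adj_inr {i : ZMod n} {x : Option (ZMod n) ⊕ ZMod n}
    (h : (helmGraph n).Adj (.inr i) x) : x = .inl (some i) := by
  obtain ⟨-, h | h⟩ := h <;> rcases x with (_ | j) | j <;> simp_all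

theorem eq_or_eq_of_adj_inl_some {i : ZMod n} {x : Option (ZMod n) ⊕ ZMod n}
    (h : (helmGraph n).Adj (.inl (some i)) x) :
    x = .inl none ∨ x = .inl (some (i + 1)) ∨ x = .inl (some (i - 1)) ∨ x = .inr i := by
  obtain ⟨-, h | h⟩ := h <;> rcases x with (_ | j) | j <;> simp_all

theorem sq_adj_inl {a b : Option (ZMod n)} (hab : a ≠ b) :
    ((helmGraph n).power 2).Adj (.inl a) (.inl b) := by
  refine power_adj_iff.2 ⟨by simpa using hab, ?_⟩
  rcases a with _ | i <;> rcases b with _ | j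
  · exact absurd rfl hab
  · exact ⟨(adj_hub j).toWalk, by simp⟩
  · exact ⟨(adj_hub i).symm.toWalk, by simp⟩
  · exact ⟨(adj_hub i).symm.toWalk.append (adj_hub j).toWalk, by simp⟩

theorem mem_of_sq_adj_inr {i : ZMod n} {x : Option (ZMod n) ⊕ ZMod n}
    (h : ((helmGraph n).power 2).Adj (.inr i) x) :
    x ∈ ({.inl none, .inl (some (i + 1)), .inl (some (i - 1)), .inl (some i)} :
      Finset (Option (ZMod n) ⊕ ZMod n)) := by
  obtain ⟨hne, p, hp⟩ := power_adj_iff.1 h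
  match p, hp with
  | .nil, _ => exact absurd rfl hne
  | .cons h₁ .nil, _ => simp [eq_of_adj_inr h₁]
  | .cons h₁ (.cons h₂ .nil), _ =>
    obtain rfl := eq_of_adj_inr h₁
    rcases eq_or_eq_of_adj_inl_some h₂ with rfl | rfl | rfl | rfl <;> simp_all
  | .cons _ (.cons _ (.cons _ _)), hp => simp at hp

def wheelVertices (n : ℕ) [NeZero n] : Finset (Option (ZMod n) ⊕ ZMod n) :=
  univ.map .inl

theorem card_wheelVertices [NeZero n] : #(wheelVertices n) = n + 1 := by
  simp [wheelVertices, ZMod.card]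

theorem sq_isClique_wheelVertices [NeZero n] :
    ((helmGraph n).power 2).IsClique (wheelVertices n : Set _) := by
  rintro _ hx _ hy hxy
  simp only [wheelVertices, coe_map, Set.mem_image, mem_coe, mem_univ, true_and,
    Function.Embedding.inl_apply] at hx hy
  obtain ⟨a, rfl⟩ := hx
  obtain ⟨b, rfl⟩ := hy
  exact sq_adj_inl (by rintro rfl; exact hxy rfl)

theorem card_le_of_sq_isClique [NeZero n] (hn : 4 ≤ n) {s : Finset (Option (ZMod n) ⊕ ZMod n)}
    (hs : ((helmGraph n).power 2).IsClique (s : Set _)) : #s ≤ n + 1 := by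
  by_cases hpendant : ∃ i, .inr i ∈ s
  · obtain ⟨i, hi⟩ := hpendant
    have hsub : s ⊆ {.inr i, .inl none, .inl (some (i + 1)), .inl (some (i - 1)),
        .inl (some i)} := by
      intro x hx
      rcases eq_or_ne x (.inr i) with rfl | hxi
      · exact mem_insert_self _ _
      · exact mem_insert_of_mem (mem_of_sq_adj_inr (hs hi hx hxi.symm))
    calc #s ≤ 5 := (card_le_card hsub).trans card_le_five
      _ ≤ n + 1 := by omega
  · have hsub : s ⊆ wheelVertices n := by
      rintro (a | i) hx
      · simp [wheelVertices]
      · exact absurd ⟨i, hx⟩ hpendant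
    exact card_wheelVertices (n := n) ▸ card_le_card hsub

end helmGraph

/-- For `n ≥ 4`, the clique number of the square of the helm graph `H_n` is `n + 1`. -/
theorem cliqueNum_helmGraph_sq (n : ℕ) (hn : 4 ≤ n) :
    ((helmGraph n).power 2).cliqueNum = n + 1 := by
  have : NeZero n := ⟨by omega⟩
  obtain ⟨s, hs⟩ := ((helmGraph n).power 2).exists_isNClique_cliqueNum
  refine le_antisymm ?_ ?_
  · exact hs.card_eq ▸ helmGraph.card_le_of_sq_isClique hn hs.isClique
  · exact helmGraph.card_wheelVertices (n := n) ▸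
      helmGraph.sq_isClique_wheelVertices.card_le_cliqueNum
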